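/- Let f be an infinite sequence of unfolding instructions, and define the infinite instruction sequence g by: g = 1·(-x) if f = 1·1·x; g = (-1)·(-x) if f = 1·(-1)·x; g = (-1)·x if f = (-1)·1·x; g = 1·x if f = (-1)·(-1)·x. Then for all n ≥ 1, the ending position E_f[n] of the n-th maximal run of P_f satisfies E_f[n] = 2n if P_g[n] = 1, and E_f[n] = 2n - 1 if P_g[n] = -1. -/

import Mathlib

/-- Paperfolding word; instructions are given with the most recent (last) instruction first. -/
def foldAux : List ℤ → List ℤ
  | [] => []
  | a :: f => foldAux f ++ a :: (foldAux f).reverse.map (fun x => -x)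

/-- `paper f` is the finite paperfolding word `P_f` for instructions `f = [f_0, f_1, …]`,
satisfying `P_ε = ε` and `P_{f·a} = P_f · a · (-P_f^R)`. -/
def paper (f : List ℤ) : List ℤ := foldAux f.reverse

/-- The sequence of lengths of the maximal runs (maximal blocks of equal symbols) of `w`. -/
def runLengths (w : List ℤ) : List ℕ := (w.splitBy (fun a b => a == b)).map List.length

/-- `p` (indexed from 1) is the infinite paperfolding sequence with instructions `f`,
i.e. every finite paperfolding word of a prefix of `f` is a prefix of `p`. -/
def IsLimit (f : ℕ → ℤ) (p : ℕ → ℤ) : Prop :=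
  ∀ m k, k < (paper ((List.range m).map f)).length →
    p (k + 1) = (paper ((List.range m).map f)).getD k 0

/-- `E` enumerates, in increasing order (`E 1 < E 2 < ⋯`, with the convention `E 0 = 0`),
the ending positions of the maximal runs of the sequence `p` (indexed from 1):
position `m ≥ 1` ends a run iff `p m ≠ p (m+1)`. -/
def IsRunEnds (p : ℕ → ℤ) (E : ℕ → ℕ) : Prop :=
  E 0 = 0 ∧ StrictMono E ∧ ∀ m, 1 ≤ m → ((∃ n, 1 ≤ n ∧ E n = m) ↔ p m ≠ p (m + 1))

/-!
Unfolding the first instruction shows that `P_f` interleaves the alternating sequence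
`f₀, -f₀, f₀, …` (odd positions) with `P_{f₁f₂…}` (even positions). The sequence `g` is
`f₀ · (f₁, -f₂, -f₃, …)`, and negating every instruction but the first multiplies the `n`-th
term of the paperfolding sequence by `(-1)^(n+1)`; together this gives
`P_g[n] = P_f[2n-1] · P_f[2n]`. Since `P_f[2n-1]` and `P_f[2n+1]` have opposite signs, exactly one
of the positions `2n-1`, `2n` ends a run of `P_f`: position `2n` when `P_f[2n-1] = P_f[2n]`,
i.e. `P_g[n] = 1`, and position `2n-1` otherwise.
-/

/-- `interleaveAlt c [u₀, …, uₙ₋₁] = [c, u₀, -c, u₁, c, …, uₙ₋₁, ±c]`. -/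
def interleaveAlt (c : ℤ) : List ℤ → List ℤ
  | [] => [c]
  | x :: t => c :: x :: interleaveAlt (-c) t

namespace interleaveAlt

theorem append_cons (u : List ℤ) (c b : ℤ) (v : List ℤ) :
    interleaveAlt c (u ++ b :: v) =
      interleaveAlt c u ++ b :: interleaveAlt ((-1) ^ (u.length + 1) * c) v := by
  induction u generalizing c with
  | nil => simp [interleaveAlt]
  | cons x t ih =>
    simp only [List.cons_append, interleaveAlt, ih, List.length_cons, pow_succ]
    ring_nf

theorem reverse_map_neg (u : List ℤ) (c : ℤ) :
    (interleaveAlt c u).reverse.map Neg.neg =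
      interleaveAlt ((-1) ^ (u.length + 1) * c) (u.reverse.map Neg.neg) := by
  induction u generalizing c with
  | nil => simp [interleaveAlt]
  | cons x t ih =>
    simp only [interleaveAlt, List.reverse_cons, List.map_append, List.map_cons, List.map_nil,
      ih, append_cons, List.length_cons, List.length_map, List.length_reverse]
    have hsign : (-1 : ℤ) ^ (t.length + 1) * ((-1) ^ (t.length + 1 + 1) * c) = -c := by
      rw [← mul_assoc, ← pow_add, Odd.neg_one_pow ⟨t.length + 1, by ring⟩, neg_one_mul]
    have hshift : (-1 : ℤ) ^ (t.length + 1) * -c = (-1) ^ (t.length + 1 + 1) * c := by ring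
    rw [hsign, hshift]
    simp

theorem getD_even (u : List ℤ) (c : ℤ) {k : ℕ} (hk : k ≤ u.length) :
    (interleaveAlt c u).getD (2 * k) 0 = (-1) ^ k * c := by
  induction u generalizing c k with
  | nil => simp_all [interleaveAlt]
  | cons x t ih =>
    cases k with
    | zero => simp [interleaveAlt]
    | succ k =>
      simp only [interleaveAlt, Nat.mul_succ, List.getD_cons_succ]
      rw [ih (-c) (by simpa using hk), pow_succ]
      ring

theorem getD_odd (u : List ℤ) (c : ℤ) (k : ℕ) :
    (interleaveAlt c u).getD (2 * k + 1) 0 = u.getD k 0 := by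
  induction u generalizing c k with
  | nil => simp [interleaveAlt]
  | cons x t ih =>
    cases k with
    | zero => simp [interleaveAlt]
    | succ k => simpa [interleaveAlt, Nat.mul_succ] using ih (-c) k

theorem getD_map_neg (u : List ℤ) (c : ℤ) (k : ℕ) :
    (interleaveAlt c (u.map Neg.neg)).getD k 0 = (-1) ^ k * (interleaveAlt c u).getD k 0 := by
  induction u generalizing c k with
  | nil => rcases k with _ | k <;> simp [interleaveAlt]
  | cons x t ih =>
    rcases k with _ | _ | k
    · simp [interleaveAlt]
    · simp [interleaveAlt]
    · simp only [List.map_cons, interleaveAlt, List.getD_cons_succ, ih, pow_succ]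
      ring

end interleaveAlt

theorem foldAux_length (l : List ℤ) : (foldAux l).length = 2 ^ l.length - 1 := by
  induction l with
  | nil => simp [foldAux]
  | cons a t ih =>
    have : 1 ≤ 2 ^ t.length := Nat.one_le_two_pow
    simp [foldAux, ih, pow_succ]
    omega

theorem foldAux_append_singleton (l : List ℤ) (a : ℤ) :
    foldAux (l ++ [a]) = interleaveAlt a (foldAux l) := by
  induction l with
  | nil => simp [foldAux, interleaveAlt]
  | cons b t ih =>
    rw [List.cons_append, foldAux, ih, foldAux, interleaveAlt.append_cons,
      interleaveAlt.reverse_map_neg]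

theorem foldAux_map {φ : ℤ → ℤ} (hφ : ∀ x, φ (-x) = -φ x) (l : List ℤ) :
    foldAux (l.map φ) = (foldAux l).map φ := by
  induction l with
  | nil => rfl
  | cons a t ih => simp [foldAux, ih, hφ, Function.comp_def]

theorem paper_length (l : List ℤ) : (paper l).length = 2 ^ l.length - 1 := by
  simp [paper, foldAux_length]

theorem paper_cons (a : ℤ) (l : List ℤ) : paper (a :: l) = interleaveAlt a (paper l) := by
  rw [paper, List.reverse_cons, foldAux_append_singleton, paper]

theorem paper_map {φ : ℤ → ℤ} (hφ : ∀ x, φ (-x) = -φ x) (l : List ℤ) :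
    paper (l.map φ) = (paper l).map φ := by
  rw [paper, ← List.map_reverse, foldAux_map hφ, paper]

theorem map_range_succ {α : Type*} (f : ℕ → α) (m : ℕ) :
    (List.range (m + 1)).map f = f 0 :: (List.range m).map (fun i => f (i + 1)) := by
  simp [List.range_succ_eq_map, Function.comp_def]

def negTail (f : ℕ → ℤ) (i : ℕ) : ℤ := if i = 0 then f 0 else -f i

namespace IsLimit

variable {f p : ℕ → ℤ}

theorem unique {p' : ℕ → ℤ} (hp : IsLimit f p) (hp' : IsLimit f p') (k : ℕ) :
    p (k + 1) = p' (k + 1) := by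
  have hk : k < (paper ((List.range (k + 1)).map f)).length := by
    rw [paper_length, List.length_map, List.length_range]
    have := Nat.lt_two_pow_self (n := k + 1)
    omega
  rw [hp _ _ hk, hp' _ _ hk]

theorem apply_odd (hp : IsLimit f p) (k : ℕ) : p (2 * k + 1) = (-1) ^ k * f 0 := by
  have hk : k < 2 ^ k := Nat.lt_two_pow_self
  have hlen : 2 * k < (paper ((List.range (k + 1)).map f)).length := by
    rw [paper_length, List.length_map, List.length_range, pow_succ]
    omega
  rw [hp _ _ hlen, map_range_succ, paper_cons, interleaveAlt.getD_even]
  rw [paper_length, List.length_map, List.length_range]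
  omega

theorem even (hp : IsLimit f p) : IsLimit (fun i => f (i + 1)) (fun k => p (2 * k)) := by
  intro m k hk
  have hlen : 2 * k + 1 < (paper ((List.range (m + 1)).map f)).length := by
    rw [paper_length, List.length_map, List.length_range, pow_succ]
    rw [paper_length, List.length_map, List.length_range] at hk
    omega
  show p (2 * (k + 1)) = _
  rw [Nat.mul_succ, hp _ _ hlen, map_range_succ, paper_cons, interleaveAlt.getD_odd]

theorem comp {φ : ℤ → ℤ} (hφ : ∀ x, φ (-x) = -φ x) (hp : IsLimit f p) :
    IsLimit (φ ∘ f) (φ ∘ p) := by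
  have hφ0 : φ 0 = 0 := by
    have := hφ 0
    rw [neg_zero] at this
    omega
  intro m k hk
  rw [← List.map_map, paper_map hφ] at hk ⊢
  rw [List.length_map] at hk
  rw [Function.comp_apply, hp _ _ hk, ← hφ0, List.getD_map, hφ0]

theorem negTail (hp : IsLimit f p) : IsLimit (negTail f) (fun k => (-1) ^ (k + 1) * p k) := by
  intro m k hk
  have hk' : k < (paper ((List.range m).map f)).length := by
    simpa only [paper_length, List.length_map] using hk
  cases m with
  | zero => simp [paper, foldAux] at hk
  | succ m =>
    have hmap : (List.range (m + 1)).map (_root_.negTail f) =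
        f 0 :: ((List.range m).map (fun i => f (i + 1))).map Neg.neg := by
      simp [map_range_succ, _root_.negTail]
    rw [hmap, paper_cons, paper_map (fun x => rfl), interleaveAlt.getD_map_neg, ← paper_cons,
      ← map_range_succ, ← hp _ _ hk']
    simp only [pow_succ]
    ring

theorem sign (hf : ∀ n, f n = -1 ∨ f n = 1) (hp : IsLimit f p) (k : ℕ) :
    p (k + 1) = -1 ∨ p (k + 1) = 1 := by
  induction k using Nat.strong_induction_on generalizing f p with
  | _ k ih =>
    obtain ⟨j, rfl | rfl⟩ := Nat.even_or_odd' k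
    · rw [hp.apply_odd j]
      rcases hf 0 with h | h <;> rcases neg_one_pow_eq_or ℤ j with h' | h' <;> simp [h, h']
    · have := ih j (by omega) (fun n => hf (n + 1)) hp.even
      rwa [Nat.mul_succ] at this

end IsLimit

namespace IsRunEnds

variable {p : ℕ → ℤ} {E : ℕ → ℕ}

theorem succ_eq_of_strictMono (hE : IsRunEnds p E) {s : ℕ → ℕ} (hs : StrictMono s)
    (hs0 : 0 < s 0) (hends : ∀ m, 1 ≤ m → ((∃ n, s n = m) ↔ p m ≠ p (m + 1))) :
    (fun n => E (n + 1)) = s := by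
  obtain ⟨hE0, hEmono, hEends⟩ := hE
  have hEsucc : StrictMono fun n => E (n + 1) := fun a b h => hEmono (Nat.succ_lt_succ h)
  refine (hEsucc.range_inj hs).mp ?_
  ext m
  simp only [Set.mem_range]
  rcases Nat.eq_zero_or_pos m with rfl | hm
  · constructor
    · rintro ⟨n, hn⟩
      have : E 0 < E (n + 1) := hEmono n.succ_pos
      omega
    · rintro ⟨n, hn⟩
      have := hs.monotone n.zero_le
      omega
  · rw [hends m hm, ← hEends m hm]
    constructor
    · rintro ⟨n, rfl⟩
      exact ⟨n + 1, n.succ_pos, rfl⟩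
    · rintro ⟨n, hn, rfl⟩
      exact ⟨n - 1, by rw [Nat.sub_add_cancel hn]⟩

theorem apply_succ_of_odd_alternating (hE : IsRunEnds p E) (hsign : ∀ k, p (k + 1) = -1 ∨ p (k + 1) = 1)
    (hodd : ∀ k, p (2 * k + 3) = -p (2 * k + 1)) (k : ℕ) :
    E (k + 1) = if p (2 * k + 1) * p (2 * k + 2) = 1 then 2 * k + 2 else 2 * k + 1 := by
  set s : ℕ → ℕ := fun k => if p (2 * k + 1) * p (2 * k + 2) = 1 then 2 * k + 2 else 2 * k + 1
  have hs_bounds (n : ℕ) : 2 * n + 1 ≤ s n ∧ s n ≤ 2 * n + 2 := by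
    simp only [s]
    split_ifs <;> omega
  have hs : StrictMono s := strictMono_nat_of_lt_succ fun n => by
    have := hs_bounds n
    have := hs_bounds (n + 1)
    omega
  have hends (m : ℕ) (hm : 1 ≤ m) : (∃ n, s n = m) ↔ p m ≠ p (m + 1) := by
    obtain ⟨k, hk⟩ : ∃ k, m = 2 * k + 1 ∨ m = 2 * k + 2 := ⟨(m - 1) / 2, by omega⟩
    have hunique : (∃ n, s n = m) ↔ s k = m := by
      refine ⟨fun ⟨n, hn⟩ => ?_, fun h => ⟨k, h⟩⟩
      obtain rfl : n = k := by have := hs_bounds n; omega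
      exact hn
    rw [hunique]
    have hsign' := hsign (2 * k + 1)
    rcases hk with rfl | rfl
    · rcases hsign (2 * k) with h1 | h1 <;> rcases hsign' with h2 | h2 <;> simp_all [s]
    · rw [hodd]
      rcases hsign (2 * k) with h1 | h1 <;> rcases hsign' with h2 | h2 <;> simp_all [s]
  exact congrFun (hE.succ_eq_of_strictMono hs (hs_bounds 0).1 hends) k

end IsRunEnds

theorem runEnds_via_assoc_general (f g p q : ℕ → ℤ) (E : ℕ → ℕ)
    (hf : ∀ n, f n = -1 ∨ f n = 1)
    (hg1 : f 0 = 1 → f 1 = 1 → g 0 = 1 ∧ ∀ n, 1 ≤ n → g n = -f (n + 1))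
    (hg2 : f 0 = 1 → f 1 = -1 → g 0 = -1 ∧ ∀ n, 1 ≤ n → g n = -f (n + 1))
    (hg3 : f 0 = -1 → f 1 = 1 → g 0 = -1 ∧ ∀ n, 1 ≤ n → g n = f (n + 1))
    (hg4 : f 0 = -1 → f 1 = -1 → g 0 = 1 ∧ ∀ n, 1 ≤ n → g n = f (n + 1))
    (hp : IsLimit f p) (hq : IsLimit g q) (hE : IsRunEnds p E) :
    ∀ n, 1 ≤ n → (q n = 1 → E n = 2 * n) ∧ (q n = -1 → E n = 2 * n - 1) := by
  have hg : g = (f 0 * ·) ∘ negTail (fun i => f (i + 1)) := by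
    funext i
    rcases hf 0 with h0 | h0 <;> rcases hf 1 with h1 | h1 <;> rcases i with _ | i <;>
      simp [negTail, h0, h1, hg1, hg2, hg3, hg4]
  have hq' := (hp.even.negTail).comp (φ := (f 0 * ·)) (fun x => mul_neg _ x)
  have hqp (k : ℕ) : q (k + 1) = p (2 * k + 1) * p (2 * k + 2) := by
    rw [hq.unique (hg ▸ hq'), hp.apply_odd]
    simp only [Function.comp_apply, pow_succ, Nat.mul_succ]
    ring
  have hodd (k : ℕ) : p (2 * k + 3) = -p (2 * k + 1) := by
    rw [hp.apply_odd, show 2 * k + 3 = 2 * (k + 1) + 1 by ring, hp.apply_odd, pow_succ]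
    ring
  have hsign := hp.sign hf
  intro n hn
  obtain ⟨k, rfl⟩ : ∃ k, n = k + 1 := ⟨n - 1, by omega⟩
  rw [hE.apply_succ_of_odd_alternating hsign hodd, hqp]
  exact ⟨fun h => by simp [h, Nat.mul_succ], fun h => by simp [h]; omega⟩

theorem runEnds_via_assoc (f g p q : ℕ → ℤ) (E : ℕ → ℕ)
    (hf : ∀ n, f n = -1 ∨ f n = 1) (hg : ∀ n, g n = -1 ∨ g n = 1)
    (hg1 : f 0 = 1 → f 1 = 1 → g 0 = 1 ∧ ∀ n, 1 ≤ n → g n = -f (n + 1))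
    (hg2 : f 0 = 1 → f 1 = -1 → g 0 = -1 ∧ ∀ n, 1 ≤ n → g n = -f (n + 1))
    (hg3 : f 0 = -1 → f 1 = 1 → g 0 = -1 ∧ ∀ n, 1 ≤ n → g n = f (n + 1))
    (hg4 : f 0 = -1 → f 1 = -1 → g 0 = 1 ∧ ∀ n, 1 ≤ n → g n = f (n + 1))
    (hp : IsLimit f p) (hq : IsLimit g q) (hE : IsRunEnds p E) :
    ∀ n, 1 ≤ n → (q n = 1 → E n = 2 * n) ∧ (q n = -1 → E n = 2 * n - 1) :=
  runEnds_via_assoc_general f g p q E hf hg1 hg2 hg3 hg4 hp hq hE
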